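/- For every real x with 0 ≤ x ≤ 1, one has √(2x)·(1 − x/12) ≤ arcosh(1 + x) ≤ √(2x). -/
import Mathlib

lemma cosh_upper_aux (u : ℝ) (h0 : 0 ≤ u) (h1 : u ≤ 1) :
    Real.cosh u ≤ 1 + u^2/2 + u^4/24 + 7*u^6/4320 := by
  have hu : |u| ≤ 1 := abs_le.2 ⟨by linarith, h1⟩
  have hnu : |(-u)| ≤ 1 := by rwa [abs_neg]
  have e1 := Real.exp_bound hu (n := 6) (by norm_num)
  have e2 := Real.exp_bound hnu (n := 6) (by norm_num)
  rw [abs_of_nonneg h0] at e1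
  rw [abs_neg, abs_of_nonneg h0] at e2
  simp [Finset.sum_range_succ, Nat.factorial] at e1 e2
  rw [abs_le] at e1 e2
  have h1' := e1.2
  have h2' := e2.2
  rw [Real.cosh_eq]
  ring_nf at h1' h2' ⊢
  nlinarith [h1', h2']

lemma key_poly (x w : ℝ) (hx0 : 0 ≤ x) (hx1 : x ≤ 1) (hw : w = x*(1-x/12)^2/2) :
    2*(1 + w/2 + w^2/24 + 7*w^3/4320)^2 ≤ 2 + x := by
  subst hw
  nlinarith [pow_nonneg hx0 3, pow_nonneg hx0 6, pow_nonneg hx0 7, pow_nonneg hx0 9,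
    pow_nonneg hx0 10, pow_nonneg hx0 12, pow_nonneg hx0 13, pow_nonneg hx0 15,
    pow_nonneg hx0 17,
    pow_le_pow_of_le_one hx0 hx1 (show 3 ≤ 4 by norm_num),
    pow_le_pow_of_le_one hx0 hx1 (show 3 ≤ 5 by norm_num),
    pow_le_pow_of_le_one hx0 hx1 (show 3 ≤ 8 by norm_num),
    pow_le_pow_of_le_one hx0 hx1 (show 3 ≤ 11 by norm_num),
    pow_le_pow_of_le_one hx0 hx1 (show 3 ≤ 14 by norm_num),
    pow_le_pow_of_le_one hx0 hx1 (show 3 ≤ 16 by norm_num),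
    pow_le_pow_of_le_one hx0 hx1 (show 3 ≤ 18 by norm_num)]

/-- The inverse hyperbolic cosine. -/
noncomputable def arcosh (x : ℝ) : ℝ := Real.log (x + Real.sqrt (x ^ 2 - 1))

lemma cosh_arcosh_one_add (x : ℝ) (hx0 : 0 ≤ x) :
    Real.cosh (arcosh (1 + x)) = 1 + x := by
  unfold arcosh
  set s := Real.sqrt ((1 + x) ^ 2 - 1) with hs
  have hD : (0:ℝ) ≤ (1 + x) ^ 2 - 1 := by nlinarith
  have hs2 : s ^ 2 = (1 + x) ^ 2 - 1 := Real.sq_sqrt hD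
  have hs0 : 0 ≤ s := Real.sqrt_nonneg _
  have hy : 0 < 1 + x + s := by linarith
  rw [Real.cosh_eq, Real.exp_log hy, Real.exp_neg, Real.exp_log hy]
  field_simp
  nlinarith [hs2]

lemma arcosh_one_add_nonneg (x : ℝ) (hx0 : 0 ≤ x) : 0 ≤ arcosh (1 + x) := by
  unfold arcosh
  apply Real.log_nonneg
  have := Real.sqrt_nonneg ((1 + x) ^ 2 - 1)
  linarith

/-- For `0 ≤ x ≤ 1`, `√(2x)·(1 − x/12) ≤ arcosh(1 + x) ≤ √(2x)`. -/
theorem arcosh_one_add_bounds (x : ℝ) (hx0 : 0 ≤ x) (hx1 : x ≤ 1) :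
    Real.sqrt (2 * x) * (1 - x / 12) ≤ arcosh (1 + x) ∧
      arcosh (1 + x) ≤ Real.sqrt (2 * x) := by
  have hca := cosh_arcosh_one_add x hx0
  have hanon := arcosh_one_add_nonneg x hx0
  have ht0 : 0 ≤ Real.sqrt (2 * x) := Real.sqrt_nonneg _
  have ht2 : Real.sqrt (2 * x) ^ 2 = 2 * x := Real.sq_sqrt (by linarith)
  constructor
  · -- lower bound
    set s₀ := Real.sqrt (2 * x) * (1 - x / 12) with hs₀
    have hs₀0 : 0 ≤ s₀ := mul_nonneg ht0 (by linarith)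
    have hu2 : (s₀ / 2) ^ 2 = x * (1 - x/12) ^ 2 / 2 := by
      rw [hs₀]; rw [div_pow, mul_pow, ht2]; ring
    have hu0 : 0 ≤ s₀ / 2 := by linarith
    have hu1 : s₀ / 2 ≤ 1 := by nlinarith [hu2, sq_nonneg (1 - x/12)]
    have hcu := cosh_upper_aux (s₀ / 2) hu0 hu1
    have hkey := key_poly x ((s₀ / 2) ^ 2) hx0 hx1 hu2
    have hcosh_ge : (1:ℝ) ≤ Real.cosh (s₀ / 2) := Real.one_le_cosh _
    have hch2 : Real.cosh s₀ = 2 * Real.cosh (s₀ / 2) ^ 2 - 1 := by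
      have : s₀ = 2 * (s₀ / 2) := by ring
      rw [this, Real.cosh_two_mul, Real.sinh_sq]; ring
    have hP : Real.cosh s₀ ≤ 1 + x := by
      rw [hch2]
      have hsq : Real.cosh (s₀ / 2) ^ 2 ≤
          (1 + (s₀/2)^2/2 + ((s₀/2)^2)^2/24 + 7*((s₀/2)^2)^3/4320) ^ 2 := by
        apply pow_le_pow_left₀ (by linarith) _ 2
        calc Real.cosh (s₀ / 2) ≤ 1 + (s₀/2)^2/2 + (s₀/2)^4/24 + 7*(s₀/2)^6/4320 := hcu
          _ = 1 + (s₀/2)^2/2 + ((s₀/2)^2)^2/24 + 7*((s₀/2)^2)^3/4320 := by ring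
      nlinarith [hkey, hsq]
    have : Real.cosh s₀ ≤ Real.cosh (arcosh (1 + x)) := by rw [hca]; exact hP
    have habs := (Real.cosh_le_cosh).1 this
    rwa [abs_of_nonneg hs₀0, abs_of_nonneg hanon] at habs
  · -- upper bound
    have hsinh : Real.sqrt (2 * x) / 2 ≤ Real.sinh (Real.sqrt (2 * x) / 2) :=
      (Real.self_le_sinh_iff).2 (by linarith)
    have hsinh0 : 0 ≤ Real.sinh (Real.sqrt (2 * x) / 2) :=
      Real.sinh_nonneg_iff.2 (by linarith)
    have hcosh_ge : 1 + x ≤ Real.cosh (Real.sqrt (2 * x)) := by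
      have h2 : Real.sqrt (2 * x) = 2 * (Real.sqrt (2 * x) / 2) := by ring
      rw [h2, Real.cosh_two_mul, Real.cosh_sq]
      nlinarith [hsinh, hsinh0, ht2]
    have : Real.cosh (arcosh (1 + x)) ≤ Real.cosh (Real.sqrt (2 * x)) := by
      rw [hca]; exact hcosh_ge
    have habs := (Real.cosh_le_cosh).1 this
    rwa [abs_of_nonneg hanon, abs_of_nonneg ht0] at habs
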